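/- arXiv:2408.06719 — 3 statements merged into one kernel-verified Lean document; each statement's English description precedes it below -/
import Mathlib

section
/- Let k_1, …, k_m ≥ 2 be m integers and let G be a (P_{k_1} + P_{k_2} + … + P_{k_m})-saturated graph. If x is a vertex of G with degree 2 and N(x) = {u, v}, then uv is an edge of G. -/
open SimpleGraph

open SimpleGraph

/-- `H` has an (injective) copy inside `G`. -/
def ContainsCopy {α β : Type*} (H : SimpleGraph α) (G : SimpleGraph β) : Prop :=
  ∃ f : α ↪ β, ∀ a b, H.Adj a b → G.Adj (f a) (f b)

/-- The graph obtained from `G` by adding the edge `uv`. -/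
def addE {V : Type*} (G : SimpleGraph V) (u v : V) : SimpleGraph V :=
  G ⊔ SimpleGraph.fromEdgeSet {s(u, v)}

/-- `G` is `H`-saturated. -/
def IsSaturated {α β : Type*} (H : SimpleGraph α) (G : SimpleGraph β) : Prop :=
  ¬ ContainsCopy H G ∧ ∀ u v : β, u ≠ v → ¬ G.Adj u v → ContainsCopy H (addE G u v)

/-- The path `P_k` on `k` vertices. -/
def pathG (k : ℕ) : SimpleGraph (Fin k) where
  Adj x y := x.val + 1 = y.val ∨ y.val + 1 = x.val
  symm := ⟨fun x y h => h.symm⟩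
  loopless := ⟨fun x h => by omega⟩

/-- `tP_2`: the disjoint union of `t` independent edges. -/
def tP2 (t : ℕ) : SimpleGraph (Fin t × Fin 2) where
  Adj x y := x.1 = y.1 ∧ x.2 ≠ y.2
  symm := ⟨fun x y h => ⟨h.1.symm, h.2.symm⟩⟩
  loopless := ⟨fun x h => h.2 rfl⟩

/-- Disjoint union of two graphs. -/
def disjSum {α β : Type*} (G : SimpleGraph α) (H : SimpleGraph β) :
    SimpleGraph (α ⊕ β) where
  Adj x y := Sum.LiftRel G.Adj H.Adj x y
  symm := by
    constructor
    rintro x y (h | h)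
    · exact Sum.LiftRel.inl h.symm
    · exact Sum.LiftRel.inr h.symm
  loopless := by
    constructor
    rintro x (h | h)
    · exact h.ne rfl
    · exact h.ne rfl

/-- The linear forest `P_k + tP_2`. -/
def PkPlustP2 (k t : ℕ) : SimpleGraph (Fin k ⊕ Fin t × Fin 2) :=
  disjSum (pathG k) (tP2 t)

/-- The saturation number `sat(n, H)`. -/
noncomputable def satNumber {α : Type*} (H : SimpleGraph α) (n : ℕ) : ℕ :=
  sInf {m | ∃ G : SimpleGraph (Fin n), IsSaturated H G ∧ G.edgeSet.ncard = m}

/-- The matching number `α'(G)`. -/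
noncomputable def matchNum {V : Type*} (G : SimpleGraph V) : ℕ :=
  sSup {m | ContainsCopy (tP2 m) G}

/-- `α_k(G)`: the largest `m` with `P_k + mP_2 ⊆ G`. -/
noncomputable def alphaK {V : Type*} (k : ℕ) (G : SimpleGraph V) : ℕ :=
  sSup {m | ContainsCopy (PkPlustP2 k m) G}

/-- The linear forest `P_{k 0} + P_{k 1} + ... + P_{k (m-1)}`. -/
def pathsUnion (m : ℕ) (k : Fin m → ℕ) : SimpleGraph (Σ i : Fin m, Fin (k i)) where
  Adj x y := x.1 = y.1 ∧ (x.2.val + 1 = y.2.val ∨ y.2.val + 1 = x.2.val)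
  symm := ⟨fun x y h => ⟨h.1.symm, h.2.symm⟩⟩
  loopless := ⟨fun x h => by obtain ⟨-, h⟩ := h; omega⟩



section Aux

variable {V : Type*} {G : SimpleGraph V} {m : ℕ} {k : Fin m → ℕ}

lemma sig_val {j j' : Fin m} {a : Fin (k j)} {b : Fin (k j')}
    (h : (⟨j, a⟩ : Σ i : Fin m, Fin (k i)) = ⟨j', b⟩) : j = j' ∧ a.val = b.val := by
  obtain ⟨h1, h2⟩ := Sigma.mk.inj_iff.mp h
  subst h1
  exact ⟨rfl, congrArg Fin.val (eq_of_heq h2)⟩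

lemma sig_mk {j j' : Fin m} {a : Fin (k j)} {b : Fin (k j')}
    (h1 : j = j') (h2 : a.val = b.val) :
    (⟨j, a⟩ : Σ i : Fin m, Fin (k i)) = ⟨j', b⟩ := by
  subst h1; exact congrArg _ (Fin.ext h2)

lemma addE_adj {u v a b : V} (h : (addE G u v).Adj a b) :
    G.Adj a b ∨ (a = u ∧ b = v) ∨ (a = v ∧ b = u) := by
  rcases h with h | h
  · exact Or.inl h
  · simp only [fromEdgeSet_adj, Set.mem_singleton_iff, Sym2.eq, Sym2.rel_iff',
      Prod.mk.injEq, Prod.swap_prod_mk] at h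
    tauto

lemma addE_comm (u v : V) : addE G u v = addE G v u := by
  unfold addE
  rw [show s(v, u) = s(u, v) from Sym2.eq_swap]

/-- Insertion surgery: `x` is inserted between positions `p` and `p+1` of path `i`. -/
lemma insertion (i : Fin m) (p : ℕ) (hp : p + 1 < k i)
    (f : (Σ j : Fin m, Fin (k j)) ↪ V) (x : V)
    (hxu : G.Adj (f ⟨i, ⟨p, by omega⟩⟩) x)
    (hxv : G.Adj x (f ⟨i, ⟨p + 1, hp⟩⟩))
    (hx : ∀ s : Σ j : Fin m, Fin (k j), f s = x → s.1 = i ∧ s.2.val = k i - 1)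
    (hG : ∀ a b : Σ j : Fin m, Fin (k j), (pathsUnion m k).Adj a b →
      ¬(a.1 = i ∧ b.1 = i ∧ ((a.2.val = p ∧ b.2.val = p + 1) ∨
        (a.2.val = p + 1 ∧ b.2.val = p))) → G.Adj (f a) (f b)) :
    ContainsCopy (pathsUnion m k) G := by
  classical
  have hxu' : ∀ q : Fin (k i), q.val = p → G.Adj (f ⟨i, q⟩) x := by
    intro q hq
    have : (⟨i, q⟩ : Σ j : Fin m, Fin (k j)) = ⟨i, ⟨p, by omega⟩⟩ := sig_mk rfl hq
    rw [this]; exact hxu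
  have hxv' : ∀ q : Fin (k i), q.val = p + 1 → G.Adj x (f ⟨i, q⟩) := by
    intro q hq
    have : (⟨i, q⟩ : Σ j : Fin m, Fin (k j)) = ⟨i, ⟨p + 1, hp⟩⟩ := sig_mk rfl hq
    rw [this]; exact hxv
  set g : (Σ j : Fin m, Fin (k j)) → V := fun s =>
    if s.1 = i ∧ s.2.val = p + 1 then x
    else if s.1 = i ∧ p + 1 < s.2.val then
      f ⟨s.1, ⟨s.2.val - 1, Nat.lt_of_le_of_lt (Nat.sub_le _ _) s.2.isLt⟩⟩
    else f s with hg
  have gapp : ∀ (j : Fin m) (t : Fin (k j)), g ⟨j, t⟩ =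
      if j = i ∧ t.val = p + 1 then x
      else if j = i ∧ p + 1 < t.val then
        f ⟨j, ⟨t.val - 1, Nat.lt_of_le_of_lt (Nat.sub_le _ _) t.isLt⟩⟩
      else f ⟨j, t⟩ := fun j t => rfl
  -- g only takes the value x at the designated spot
  have gnx : ∀ (j : Fin m) (t : Fin (k j)), ¬(j = i ∧ t.val = p + 1) →
      g ⟨j, t⟩ = x → False := by
    intro j t hc h
    rw [gapp, if_neg hc] at h
    by_cases hc2 : j = i ∧ p + 1 < t.val
    · rw [if_pos hc2] at h
      obtain ⟨e1, e2⟩ := hx _ h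
      obtain ⟨rfl, h2⟩ := hc2
      simp only at e2
      have := t.isLt
      omega
    · rw [if_neg hc2] at h
      obtain ⟨e1, e2⟩ := hx _ h
      simp only at e1 e2
      subst e1
      omega
  have ginj : Function.Injective g := by
    rintro ⟨j, t⟩ ⟨j', t'⟩ h
    by_cases c1 : j = i ∧ t.val = p + 1 <;> by_cases c1' : j' = i ∧ t'.val = p + 1
    · exact sig_mk (c1.1.trans c1'.1.symm) (c1.2.trans c1'.2.symm)
    · rw [gapp, if_pos c1] at h
      exact absurd h.symm (fun hh => gnx _ _ c1' hh)
    · rw [gapp j' t', if_pos c1'] at h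
      exact absurd h (fun hh => gnx _ _ c1 hh)
    · rw [gapp, gapp, if_neg c1, if_neg c1'] at h
      by_cases c2 : j = i ∧ p + 1 < t.val <;> by_cases c2' : j' = i ∧ p + 1 < t'.val
      · rw [if_pos c2, if_pos c2'] at h
        obtain ⟨e1, e2⟩ := sig_val (f.injective h)
        simp only at e1 e2
        exact sig_mk e1 (by omega)
      · rw [if_pos c2, if_neg c2'] at h
        obtain ⟨e1, e2⟩ := sig_val (f.injective h)
        simp only at e1 e2
        obtain ⟨rfl, hgt⟩ := c2
        exact absurd e1.symm (fun hh => by simp [hh] at c1' c2'; omega)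
      · rw [if_neg c2, if_pos c2'] at h
        obtain ⟨e1, e2⟩ := sig_val (f.injective h)
        simp only at e1 e2
        obtain ⟨rfl, hgt⟩ := c2'
        exact absurd e1 (fun hh => by simp [hh] at c1 c2; omega)
      · rw [if_neg c2, if_neg c2'] at h
        obtain ⟨e1, e2⟩ := sig_val (f.injective h)
        exact sig_mk e1 e2
  refine ⟨⟨g, ginj⟩, ?_⟩
  have main : ∀ (j : Fin m) (t t' : Fin (k j)), t.val + 1 = t'.val →
      G.Adj (g ⟨j, t⟩) (g ⟨j, t'⟩) := by
    intro j t t' htt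
    rw [gapp, gapp]
    by_cases hji : j = i
    · subst hji
      rcases Nat.lt_trichotomy t.val p with hc | hc | hc
      · rw [if_neg (by simp only; omega), if_neg (by simp only; omega),
          if_neg (by simp only; omega), if_neg (by simp only; omega)]
        exact hG _ _ ⟨rfl, Or.inl htt⟩ (by simp only; omega)
      · rw [if_neg (by simp only; omega), if_neg (by simp only; omega),
          if_pos ⟨rfl, by omega⟩]
        exact hxu' t hc
      · rcases Nat.lt_or_ge p (t.val - 1) with hc2 | hc2
        · rw [if_neg (by simp only; omega), if_pos ⟨rfl, by omega⟩,
            if_neg (by simp only; omega), if_pos ⟨rfl, by omega⟩]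
          exact hG _ _ ⟨rfl, Or.inl (by simp only; omega)⟩ (by simp only; omega)
        · rw [if_pos ⟨rfl, by omega⟩, if_neg (by simp only; omega),
            if_pos ⟨rfl, by omega⟩]
          exact hxv' _ (by simp only; omega)
    · rw [if_neg (by simp [hji]), if_neg (by simp [hji]), if_neg (by simp [hji]),
        if_neg (by simp [hji])]
      exact hG _ _ ⟨rfl, Or.inl htt⟩ (by simp [hji])
  rintro ⟨j, t⟩ ⟨j', t'⟩ ⟨hj, ht⟩
  simp only at hj
  subst hj
  rcases ht with h | h
  · exact main j t t' h
  · exact (main j t' t h).symm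

/-- Swap surgery: `x` sits at position 0 of path `i` and `p = 1`. -/
lemma swapCase (i : Fin m) (h2 : 2 < k i)
    (f : (Σ j : Fin m, Fin (k j)) ↪ V) (x : V)
    (hx : f ⟨i, ⟨0, by omega⟩⟩ = x)
    (hxu : G.Adj x (f ⟨i, ⟨1, by omega⟩⟩))
    (hxv : G.Adj x (f ⟨i, ⟨2, h2⟩⟩))
    (hG : ∀ a b : Σ j : Fin m, Fin (k j), (pathsUnion m k).Adj a b →
      ¬(a.1 = i ∧ b.1 = i ∧ ((a.2.val = 1 ∧ b.2.val = 2) ∨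
        (a.2.val = 2 ∧ b.2.val = 1))) → G.Adj (f a) (f b)) :
    ContainsCopy (pathsUnion m k) G := by
  classical
  set A0 : Σ j : Fin m, Fin (k j) := ⟨i, ⟨0, by omega⟩⟩ with hA0
  set A1 : Σ j : Fin m, Fin (k j) := ⟨i, ⟨1, by omega⟩⟩ with hA1
  have swne : ∀ (j : Fin m) (t : Fin (k j)), ¬(j = i ∧ t.val = 0) →
      ¬(j = i ∧ t.val = 1) → Equiv.swap A0 A1 ⟨j, t⟩ = ⟨j, t⟩ := by
    intro j t h0 h1
    refine Equiv.swap_apply_of_ne_of_ne ?_ ?_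
    · intro hh; exact h0 ⟨(sig_val hh).1, (sig_val hh).2⟩
    · intro hh; exact h1 ⟨(sig_val hh).1, (sig_val hh).2⟩
  refine ⟨(Equiv.swap A0 A1).toEmbedding.trans f, ?_⟩
  have hx' : f A0 = x := hx
  have hxu' : G.Adj x (f A1) := hxu
  have main : ∀ (j : Fin m) (t t' : Fin (k j)), t.val + 1 = t'.val →
      G.Adj (f (Equiv.swap A0 A1 ⟨j, t⟩)) (f (Equiv.swap A0 A1 ⟨j, t'⟩)) := by
    intro j t t' htt
    by_cases hji : j = i
    · subst hji
      rcases Nat.lt_trichotomy t.val 1 with hc | hc | hc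
      · have e0 : (⟨j, t⟩ : Σ j' : Fin m, Fin (k j')) = A0 := sig_mk rfl (show _ = 0 by omega)
        have e1 : (⟨j, t'⟩ : Σ j' : Fin m, Fin (k j')) = A1 := sig_mk rfl (show _ = 1 by omega)
        rw [e0, e1, Equiv.swap_apply_left, Equiv.swap_apply_right, hx']
        exact hxu'.symm
      · have e1 : (⟨j, t⟩ : Σ j' : Fin m, Fin (k j')) = A1 := sig_mk rfl (show _ = 1 by omega)
        have e2 : (⟨j, t'⟩ : Σ j' : Fin m, Fin (k j')) = ⟨j, ⟨2, h2⟩⟩ :=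
          sig_mk rfl (show _ = 2 by omega)
        rw [e1, Equiv.swap_apply_right, hx',
          swne j t' (by simp only; omega) (by simp only; omega), e2]
        exact hxv
      · rw [swne j t (by simp only; omega) (by simp only; omega),
          swne j t' (by simp only; omega) (by simp only; omega)]
        exact hG _ _ ⟨rfl, Or.inl htt⟩ (by simp only; omega)
    · rw [swne j t (by simp [hji]) (by simp [hji]),
        swne j t' (by simp [hji]) (by simp [hji])]
      exact hG _ _ ⟨rfl, Or.inl htt⟩ (by simp [hji])
  rintro ⟨j, t⟩ ⟨j', t'⟩ ⟨hj, ht⟩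
  simp only at hj
  subst hj
  rcases ht with h | h
  · exact main j t t' h
  · exact (main j t' t h).symm

lemma key (hk : ∀ i, 2 ≤ k i)
    (hns : ¬ ContainsCopy (pathsUnion m k) G)
    (x u v : V) (hxu : G.Adj x u) (hxv : G.Adj x v)
    (hNx : ∀ y, G.Adj x y → y = u ∨ y = v)
    (f : (Σ j : Fin m, Fin (k j)) ↪ V)
    (hf : ∀ a b, (pathsUnion m k).Adj a b → (addE G u v).Adj (f a) (f b))
    (i : Fin m) (p : ℕ) (hp : p + 1 < k i)
    (hu : f ⟨i, ⟨p, by omega⟩⟩ = u) (hv : f ⟨i, ⟨p + 1, hp⟩⟩ = v) : False := by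
  have hxune : x ≠ u := hxu.ne
  have hxvne : x ≠ v := hxv.ne
  have fu : ∀ q : Fin (k i), q.val = p → f ⟨i, q⟩ = u :=
    fun q hq => (congrArg f (sig_mk rfl hq)).trans hu
  have fv : ∀ q : Fin (k i), q.val = p + 1 → f ⟨i, q⟩ = v :=
    fun q hq => (congrArg f (sig_mk rfl hq)).trans hv
  have hG : ∀ a b : Σ j : Fin m, Fin (k j), (pathsUnion m k).Adj a b →
      ¬(a.1 = i ∧ b.1 = i ∧ ((a.2.val = p ∧ b.2.val = p + 1) ∨
        (a.2.val = p + 1 ∧ b.2.val = p))) → G.Adj (f a) (f b) := by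
    intro a b hab hne
    rcases addE_adj (hf a b hab) with h | ⟨h1, h2⟩ | ⟨h1, h2⟩
    · exact h
    · obtain ⟨e1, e2⟩ := sig_val (f.injective (h1.trans hu.symm))
      obtain ⟨e3, e4⟩ := sig_val (f.injective (h2.trans hv.symm))
      exact absurd ⟨e1, e3, Or.inl ⟨e2, e4⟩⟩ hne
    · obtain ⟨e1, e2⟩ := sig_val (f.injective (h1.trans hv.symm))
      obtain ⟨e3, e4⟩ := sig_val (f.injective (h2.trans hu.symm))
      exact absurd ⟨e1, e3, Or.inr ⟨e2, e4⟩⟩ hne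
  apply hns
  by_cases hxr : ∃ s, f s = x
  · obtain ⟨⟨i', r⟩, hr⟩ := hxr
    have hnb : ∀ r' : Fin (k i'), (r.val + 1 = r'.val ∨ r'.val + 1 = r.val) →
        i' = i ∧ (r'.val = p ∨ r'.val = p + 1) := by
      intro r' hcons
      have hadj := hf ⟨i', r⟩ ⟨i', r'⟩ ⟨rfl, hcons⟩
      rw [hr] at hadj
      rcases addE_adj hadj with h | ⟨h1, -⟩ | ⟨h1, -⟩
      · rcases hNx _ h with h2 | h2
        · obtain ⟨e1, e2⟩ := sig_val (f.injective (h2.trans hu.symm))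
          exact ⟨e1, Or.inl e2⟩
        · obtain ⟨e1, e2⟩ := sig_val (f.injective (h2.trans hv.symm))
          exact ⟨e1, Or.inr e2⟩
      · exact absurd h1 hxune
      · exact absurd h1 hxvne
    have hi' : i' = i := by
      by_cases hlt : r.val + 1 < k i'
      · exact (hnb ⟨r.val + 1, hlt⟩ (Or.inl rfl)).1
      · have h1 : 1 ≤ r.val := by have := hk i'; have := r.isLt; omega
        exact (hnb ⟨r.val - 1, by omega⟩ (Or.inr (by simp only; omega))).1
    subst hi'
    have hrp : r.val ≠ p := by
      intro h
      exact hxune (hr.symm.trans (fu r h))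
    have hrp1 : r.val ≠ p + 1 := by
      intro h
      exact hxvne (hr.symm.trans (fv r h))
    have hrlt := r.isLt
    by_cases hmid : 0 < r.val ∧ r.val + 1 < k i'
    · exfalso
      have n1 := (hnb ⟨r.val - 1, by omega⟩ (Or.inr (by simp only; omega))).2
      have n2 := (hnb ⟨r.val + 1, hmid.2⟩ (Or.inl rfl)).2
      simp only at n1 n2
      omega
    · by_cases h0 : r.val = 0
      · have hn := (hnb ⟨1, by have := hk i'; omega⟩ (Or.inl (by simp only; omega))).2
        simp only at hn
        have hp1 : p = 1 := by omega
        subst hp1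
        exact swapCase i' (by omega) f x ((congrArg f (sig_mk rfl (show (0:ℕ) = r.val by omega))).trans hr)
          (by rw [fu _ rfl]; exact hxu) (by rw [fv _ rfl]; exact hxv) hG
      · have hrbig : r.val + 1 = k i' := by
          rcases Nat.lt_or_ge (r.val + 1) (k i') with h | h
          · exact absurd ⟨by omega, h⟩ hmid
          · omega
        have hn := (hnb ⟨r.val - 1, by omega⟩ (Or.inr (by simp only; omega))).2
        simp only at hn
        refine insertion i' p hp f x (by rw [fu _ rfl]; exact hxu.symm)
          (by rw [fv _ rfl]; exact hxv) ?_ hG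
        rintro ⟨j, t⟩ hs
        obtain ⟨e1, e2⟩ := sig_val (f.injective (hs.trans hr.symm))
        exact ⟨e1, by simp only at e2 ⊢; omega⟩
  · exact insertion i p hp f x (by rw [fu _ rfl]; exact hxu.symm)
      (by rw [fv _ rfl]; exact hxv) (fun s hs => absurd ⟨s, hs⟩ hxr) hG

end Aux

theorem deg_two_neighbors_adjacent {V : Type*} [Fintype V] (G : SimpleGraph V)
    (m : ℕ) (hm : 0 < m) (k : Fin m → ℕ) (hk : ∀ i, 2 ≤ k i)
    (hsat : IsSaturated (pathsUnion m k) G)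
    (x u v : V) (huv : u ≠ v) (hN : G.neighborSet x = {u, v}) :
    G.Adj u v := by
  by_contra hadj
  obtain ⟨hns, hsat2⟩ := hsat
  have hxu : G.Adj x u := by
    have : u ∈ G.neighborSet x := by rw [hN]; exact Set.mem_insert u {v}
    exact this
  have hxv : G.Adj x v := by
    have : v ∈ G.neighborSet x := by rw [hN]; exact Set.mem_insert_of_mem u rfl
    exact this
  have hNx : ∀ y, G.Adj x y → y = u ∨ y = v := by
    intro y hy
    have : y ∈ G.neighborSet x := hy
    rw [hN] at this
    exact this
  obtain ⟨f, hf⟩ := hsat2 u v huv hadj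
  by_cases hall : ∀ a b, (pathsUnion m k).Adj a b → G.Adj (f a) (f b)
  · exact hns ⟨f, hall⟩
  push_neg at hall
  obtain ⟨a, b, hab, hnG⟩ := hall
  have hf' : ∀ a b, (pathsUnion m k).Adj a b → (addE G v u).Adj (f a) (f b) := by
    rw [← addE_comm]; exact hf
  obtain ⟨i, q⟩ := a
  obtain ⟨i2, q2⟩ := b
  obtain ⟨hj, hc⟩ := hab
  simp only at hj
  subst hj
  simp only at hc
  have hab' : (pathsUnion m k).Adj ⟨i, q⟩ ⟨i, q2⟩ := ⟨rfl, hc⟩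
  rcases addE_adj (hf _ _ hab') with h | ⟨h1, h2⟩ | ⟨h1, h2⟩
  · exact hnG h
  · rcases hc with hc | hc
    · exact key hk hns x u v hxu hxv hNx f hf i q.val (by omega)
        ((congrArg f (sig_mk rfl rfl)).trans h1)
        ((congrArg f (sig_mk rfl hc)).trans h2)
    · exact key hk hns x v u hxv hxu (fun y hy => (hNx y hy).symm) f hf' i q2.val (by omega)
        ((congrArg f (sig_mk rfl rfl)).trans h2)
        ((congrArg f (sig_mk rfl hc)).trans h1)
  · rcases hc with hc | hc
    · exact key hk hns x v u hxv hxu (fun y hy => (hNx y hy).symm) f hf' i q.val (by omega)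
        ((congrArg f (sig_mk rfl rfl)).trans h1)
        ((congrArg f (sig_mk rfl hc)).trans h2)
    · exact key hk hns x u v hxu hxv hNx f hf i q2.val (by omega)
        ((congrArg f (sig_mk rfl rfl)).trans h2)
        ((congrArg f (sig_mk rfl hc)).trans h1)
end

section
/- Let G be a (P_k + tP_2)-saturated graph with k ≥ 2 and t ≥ 1, let w be an isolated vertex of G, and let x be any non-isolated vertex of G. Then for every subgraph H of G + xw isomorphic to P_k + tP_2, the set N_G[x] ∪ {w} is contained in the vertex set of H. -/
open SimpleGraph

open SimpleGraph

theorem closed_nbhd_in_copy {V : Type*} [Fintype V] (G : SimpleGraph V) (k t : ℕ)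
    (hk : 2 ≤ k) (ht : 1 ≤ t) (hsat : IsSaturated (PkPlustP2 k t) G)
    (w x : V) (hw : G.neighborSet w = ∅) (hx : (G.neighborSet x).Nonempty)
    (f : (Fin k ⊕ Fin t × Fin 2) → V) (hinj : Function.Injective f)
    (hhom : ∀ a b, (PkPlustP2 k t).Adj a b → (addE G x w).Adj (f a) (f b)) :
    insert x (G.neighborSet x) ∪ {w} ⊆ Set.range f := by
  obtain ⟨hnc, -⟩ := hsat
  have hwadj : ∀ v, ¬ G.Adj w v := by
    intro v hv
    have : v ∈ G.neighborSet w := hv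
    rw [hw] at this; exact this
  have hxw : x ≠ w := by
    rintro rfl
    obtain ⟨u, hu⟩ := hx
    exact hwadj u hu
  have hcase : ∀ a b, (PkPlustP2 k t).Adj a b →
      G.Adj (f a) (f b) ∨ (f a = x ∧ f b = w) ∨ (f a = w ∧ f b = x) := by
    intro a b hab
    rcases hhom a b hab with h | h
    · exact Or.inl h
    · rw [fromEdgeSet_adj, Set.mem_singleton_iff, Sym2.eq_iff] at h
      exact Or.inr h.1
  have hwr : w ∈ Set.range f := by
    by_contra hwr
    refine hnc ⟨⟨f, hinj⟩, ?_⟩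
    intro a b hab
    rcases hcase a b hab with h | ⟨_, h⟩ | ⟨h, _⟩
    · exact h
    · exact absurd ⟨b, h⟩ hwr
    · exact absurd ⟨a, h⟩ hwr
  have hxr : x ∈ Set.range f := by
    by_contra hxr
    refine hnc ⟨⟨f, hinj⟩, ?_⟩
    intro a b hab
    rcases hcase a b hab with h | ⟨h, _⟩ | ⟨_, h⟩
    · exact h
    · exact absurd ⟨a, h⟩ hxr
    · exact absurd ⟨b, h⟩ hxr
  intro v hv
  rcases hv with hv | hv
  · rcases hv with rfl | hv
    · exact hxr
    · have hvx : G.Adj x v := hv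
      by_contra hvr
      obtain ⟨a₀, ha₀⟩ := hwr
      classical
      refine hnc ⟨⟨fun a => if a = a₀ then v else f a, ?_⟩, ?_⟩
      · intro a b hab
        dsimp only at hab
        by_cases h1 : a = a₀ <;> by_cases h2 : b = a₀
        · exact h1.trans h2.symm
        · rw [if_pos h1, if_neg h2] at hab
          exact absurd ⟨b, hab.symm⟩ hvr
        · rw [if_neg h1, if_pos h2] at hab
          exact absurd ⟨a, hab⟩ hvr
        · rw [if_neg h1, if_neg h2] at hab
          exact hinj hab
      · intro a b hab
        show G.Adj (if a = a₀ then v else f a) (if b = a₀ then v else f b)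
        have hne : a ≠ b := hab.ne
        by_cases h1 : a = a₀
        · have hb : b ≠ a₀ := fun h => hne (h1.trans h.symm)
          rw [if_pos h1, if_neg hb]
          rcases hcase a b hab with h | ⟨h, _⟩ | ⟨_, h⟩
          · rw [h1, ha₀] at h
            exact absurd h (hwadj _)
          · rw [h1, ha₀] at h
            exact absurd h.symm hxw
          · rw [h]
            exact hvx.symm
        · by_cases h2 : b = a₀
          · rw [if_neg h1, if_pos h2]
            rcases hcase a b hab with h | ⟨h, _⟩ | ⟨h, _⟩
            · rw [h2, ha₀] at h
              exact absurd h.symm (hwadj _)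
            · rw [h]
              exact hvx
            · exact absurd (hinj (h.trans ha₀.symm)) h1
          · rw [if_neg h1, if_neg h2]
            rcases hcase a b hab with h | ⟨_, h⟩ | ⟨h, _⟩
            · exact h
            · exact absurd (hinj (h.trans ha₀.symm)) h2
            · exact absurd (hinj (h.trans ha₀.symm)) h1
  · rcases hv with rfl
    exact hwr
end

section
/- Let G be a (P_k + tP_2)-saturated graph with k ≥ 6 and t ≥ 1. If G has at least one isolated vertex, then G is not book-structural. -/
open SimpleGraph

open SimpleGraph

/-- The fan `F_i`: `i` triangles sharing the center `none`. -/
def fanGraph (i : ℕ) : SimpleGraph (Option (Fin i × Fin 2)) where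
  Adj x y :=
    match x, y with
    | none, none => False
    | none, some _ => True
    | some _, none => True
    | some a, some b => a.1 = b.1 ∧ a.2 ≠ b.2
  symm := by
    constructor
    rintro (_ | a) (_ | b) h
    · exact h.elim
    · trivial
    · trivial
    · exact ⟨h.1.symm, h.2.symm⟩
  loopless := by
    constructor
    rintro (_ | a) h
    · exact h
    · exact h.2 rfl

/-- `c` disjoint triangles `cK_3`. -/
def trianglesGraph (c : ℕ) : SimpleGraph (Fin c × Fin 3) where
  Adj x y := x.1 = y.1 ∧ x.2 ≠ y.2
  symm := ⟨fun x y h => ⟨h.1.symm, h.2.symm⟩⟩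
  loopless := ⟨fun x h => h.2 rfl⟩

/-- `F` is a disjoint union of fans, each of order at least `7`. -/
def IsFansUnion {W : Type*} (F : SimpleGraph W) : Prop :=
  ∀ C : F.ConnectedComponent, ∃ i, 3 ≤ i ∧ Nonempty ((F.induce C.supp) ≃g fanGraph i)

/-- The `Δ₊fan Δ₊F_i`: `i - 1` triangles and one `K₄` sharing the center `none`. -/
def deltaPlusFan (i : ℕ) : SimpleGraph (Option ((Fin (i - 1) × Fin 2) ⊕ Fin 3)) where
  Adj x y :=
    match x, y with
    | none, none => False
    | none, some _ => True
    | some _, none => True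
    | some (.inl a), some (.inl b) => a.1 = b.1 ∧ a.2 ≠ b.2
    | some (.inr a), some (.inr b) => a ≠ b
    | some _, some _ => False
  symm := by
    constructor
    rintro (_ | (a | a)) (_ | (b | b)) h <;>
      first
        | exact h.elim
        | trivial
        | exact ⟨h.1.symm, h.2.symm⟩
        | exact h.symm
        | exact Ne.symm h
  loopless := by
    constructor
    rintro (_ | (a | a)) h
    · exact h
    · exact h.2 rfl
    · exact h rfl

/-- The `Δfan ΔF_i`: obtained from `Δ₊F_i` by deleting the edge between the
center and the `K₄`-vertex `0`. -/
def deltaFan (i : ℕ) : SimpleGraph (Option ((Fin (i - 1) × Fin 2) ⊕ Fin 3)) where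
  Adj x y :=
    match x, y with
    | none, none => False
    | none, some (.inl _) => True
    | some (.inl _), none => True
    | none, some (.inr a) => a ≠ 0
    | some (.inr a), none => a ≠ 0
    | some (.inl a), some (.inl b) => a.1 = b.1 ∧ a.2 ≠ b.2
    | some (.inr a), some (.inr b) => a ≠ b
    | some _, some _ => False
  symm := by
    constructor
    rintro (_ | (a | a)) (_ | (b | b)) h <;>
      first
        | exact h.elim
        | trivial
        | exact ⟨h.1.symm, h.2.symm⟩
        | exact h.symm
        | exact Ne.symm h
        | exact h
  loopless := by
    constructor
    rintro (_ | (a | a)) h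
    · exact h
    · exact h.2 rfl
    · exact h rfl

/-- The `ffan F²_{i,j}`: two disjoint fans with centers joined by an edge. -/
def ffan (i j : ℕ) :
    SimpleGraph ((Option (Fin i × Fin 2)) ⊕ (Option (Fin j × Fin 2))) where
  Adj x y :=
    match x, y with
    | .inl a, .inl b => (fanGraph i).Adj a b
    | .inr a, .inr b => (fanGraph j).Adj a b
    | .inl none, .inr none => True
    | .inr none, .inl none => True
    | _, _ => False
  symm := by
    constructor
    rintro ((_ | a) | (_ | a)) ((_ | b) | (_ | b)) h <;>
      first
        | exact h.elim
        | trivial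
        | exact ⟨h.1.symm, h.2.symm⟩
  loopless := by
    constructor
    rintro ((_ | a) | (_ | a)) h
    · exact h
    · exact h.2 rfl
    · exact h
    · exact h.2 rfl

/-- `G` is book-structural. -/
def BookStructural {V : Type*} (G : SimpleGraph V) : Prop :=
  ∃ u v : V, u ≠ v ∧ (G.neighborSet u).ncard = 2 ∧ (G.neighborSet v).ncard = 2 ∧
    G.neighborSet u = G.neighborSet v

section BookAux

lemma addE_cases {V : Type*} {G : SimpleGraph V} {c d x y : V} (h : (addE G c d).Adj x y) :
    G.Adj x y ∨ (x = c ∧ y = d) ∨ (x = d ∧ y = c) := by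
  simp only [addE, sup_adj, fromEdgeSet_adj, Set.mem_singleton_iff, Sym2.eq, Sym2.rel_iff',
    Prod.mk.injEq, Prod.swap_prod_mk] at h
  tauto

lemma adjP_inl_iff {k t : ℕ} {x y : Fin k} :
    (PkPlustP2 k t).Adj (Sum.inl x) (Sum.inl y) ↔ (x.val + 1 = y.val ∨ y.val + 1 = x.val) := by
  constructor
  · rintro (h | h); exact h
  · intro h; exact Sum.LiftRel.inl h

lemma adjP_inr_iff {k t : ℕ} {x y : Fin t × Fin 2} :
    (PkPlustP2 k t).Adj (Sum.inr x) (Sum.inr y) ↔ (x.1 = y.1 ∧ x.2 ≠ y.2) := by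
  constructor
  · rintro (h | h); exact h
  · intro h; exact Sum.LiftRel.inr h

lemma adjP_not_lr {k t : ℕ} {x : Fin k} {y : Fin t × Fin 2} :
    ¬ (PkPlustP2 k t).Adj (Sum.inl x) (Sum.inr y) := by rintro (h | h)

lemma adjP_not_rl {k t : ℕ} {x : Fin k} {y : Fin t × Fin 2} :
    ¬ (PkPlustP2 k t).Adj (Sum.inr y) (Sum.inl x) := by rintro (h | h)

lemma fin2_other {z d : Fin 2} (h : z ≠ d) : z = ⟨1 - d.val, by omega⟩ := by
  have hz := z.isLt; have hd := d.isLt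
  have : z.val ≠ d.val := fun hh => h (Fin.ext hh)
  exact Fin.ext (by simp; omega)

lemma exists_nbrP {k t : ℕ} (hk : 2 ≤ k) (x : Fin k ⊕ Fin t × Fin 2) :
    ∃ y, (PkPlustP2 k t).Adj x y := by
  rcases x with q | ⟨c, d⟩
  · by_cases h : q.val + 1 < k
    · exact ⟨Sum.inl ⟨q.val + 1, h⟩, adjP_inl_iff.mpr (Or.inl rfl)⟩
    · have hq := q.isLt
      exact ⟨Sum.inl ⟨q.val - 1, by omega⟩, adjP_inl_iff.mpr (Or.inr (by simp; omega))⟩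
  · refine ⟨Sum.inr (c, ⟨1 - d.val, by omega⟩), adjP_inr_iff.mpr ⟨rfl, fun h => ?_⟩⟩
    have := congrArg Fin.val h
    have hd := d.isLt
    simp at this; omega

lemma nbr_of_r {V : Type*} {G : SimpleGraph V} {k t : ℕ} {w a : V}
    (hw : ∀ x, ¬ G.Adj w x) (hwa : w ≠ a)
    {f : (Fin k ⊕ Fin t × Fin 2) ↪ V}
    (hf : ∀ x y, (PkPlustP2 k t).Adj x y → (addE G w a).Adj (f x) (f y))
    {r y : Fin k ⊕ Fin t × Fin 2} (hr : f r = w) (hy : (PkPlustP2 k t).Adj r y) : f y = a := by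
  have h := hf r y hy
  rw [hr] at h
  rcases addE_cases h with h | ⟨_, h⟩ | ⟨h, _⟩
  · exact absurd h (hw _)
  · exact h
  · exact absurd h hwa

lemma adj_out {V : Type*} {G : SimpleGraph V} {k t : ℕ} {w a : V}
    (hw : ∀ x, ¬ G.Adj w x) (hwa : w ≠ a)
    {f : (Fin k ⊕ Fin t × Fin 2) ↪ V}
    (hf : ∀ x y, (PkPlustP2 k t).Adj x y → (addE G w a).Adj (f x) (f y))
    {r x y : Fin k ⊕ Fin t × Fin 2} (hr : f r = w) (hx : x ≠ r) (hy : y ≠ r)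
    (hxy : (PkPlustP2 k t).Adj x y) : G.Adj (f x) (f y) := by
  rcases addE_cases (hf x y hxy) with h | ⟨h, _⟩ | ⟨_, h⟩
  · exact h
  · exact absurd (f.injective (h.trans hr.symm)) hx
  · exact absurd (f.injective (h.trans hr.symm)) hy

lemma get_m {V : Type*} {G : SimpleGraph V} {k t : ℕ} {w a u : V}
    (hw : ∀ x, ¬ G.Adj w x) (hwa : w ≠ a) (hua : G.Adj u a)
    (hno : ¬ ContainsCopy (PkPlustP2 k t) G)
    {f : (Fin k ⊕ Fin t × Fin 2) ↪ V}
    (hf : ∀ x y, (PkPlustP2 k t).Adj x y → (addE G w a).Adj (f x) (f y))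
    {r : Fin k ⊕ Fin t × Fin 2} (hr : f r = w) : ∃ m, f m = u := by
  by_contra hc
  push_neg at hc
  refine hno ⟨⟨fun x => if x = r then u else f x, ?_⟩, ?_⟩
  · intro x y h
    dsimp only at h
    by_cases hx : x = r
    · by_cases hy : y = r
      · rw [hx, hy]
      · rw [if_pos hx, if_neg hy] at h
        exact absurd h.symm (hc y)
    · by_cases hy : y = r
      · rw [if_neg hx, if_pos hy] at h
        exact absurd h (hc x)
      · rw [if_neg hx, if_neg hy] at h
        exact f.injective h
  · intro x y hxy
    show G.Adj (if x = r then u else f x) (if y = r then u else f y)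
    by_cases hx : x = r <;> by_cases hy : y = r
    · exact absurd hxy (by rw [hx, hy]; exact (PkPlustP2 k t).loopless.irrefl r)
    · rw [if_pos hx, if_neg hy, nbr_of_r hw hwa hf hr (by rw [← hx]; exact hxy)]
      exact hua
    · rw [if_neg hx, if_pos hy, nbr_of_r hw hwa hf hr (by rw [← hy]; exact hxy.symm)]
      exact hua.symm
    · rw [if_neg hx, if_neg hy]
      exact adj_out hw hwa hf hr hx hy hxy

lemma nbr_m {V : Type*} {G : SimpleGraph V} {k t : ℕ} {w a b u : V}
    (hw : ∀ x, ¬ G.Adj w x) (hwa : w ≠ a)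
    (hNu : ∀ x, G.Adj u x ↔ x = a ∨ x = b)
    {f : (Fin k ⊕ Fin t × Fin 2) ↪ V}
    (hf : ∀ x y, (PkPlustP2 k t).Adj x y → (addE G w a).Adj (f x) (f y))
    {r m : Fin k ⊕ Fin t × Fin 2} (hr : f r = w) (hm : f m = u)
    {y : Fin k ⊕ Fin t × Fin 2} (hy : (PkPlustP2 k t).Adj m y) : f y = a ∨ f y = b := by
  have hua : G.Adj u a := (hNu a).mpr (Or.inl rfl)
  have hmr : m ≠ r := by
    intro h
    rw [h, hr] at hm
    exact hw a (hm ▸ hua)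
  have hyr : y ≠ r := by
    intro h
    have := nbr_of_r hw hwa hf hr (by rw [← h]; exact hy.symm)
    rw [hm] at this
    exact hua.ne this
  have := adj_out hw hwa hf hr hmr hyr hy
  rw [hm] at this
  exact (hNu _).mp this

lemma caseB {V : Type*} {G : SimpleGraph V} {k t : ℕ} (hk : 6 ≤ k) {w a b u v : V}
    (hw : ∀ x, ¬ G.Adj w x) (huv : u ≠ v)
    (hNu : ∀ x, G.Adj u x ↔ x = a ∨ x = b)
    (hNv : ∀ x, G.Adj v x ↔ x = a ∨ x = b)
    (hno : ¬ ContainsCopy (PkPlustP2 k t) G)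
    (f : (Fin k ⊕ Fin t × Fin 2) ↪ V)
    (hf : ∀ x y, (PkPlustP2 k t).Adj x y → (addE G w a).Adj (f x) (f y))
    (hr : f (Sum.inl (⟨0, by omega⟩ : Fin k)) = w) : False := by
  have hua : G.Adj u a := (hNu a).mpr (Or.inl rfl)
  have hva : G.Adj v a := (hNv a).mpr (Or.inl rfl)
  have hwa : w ≠ a := fun h => hw u (h ▸ hua.symm)
  have hs0 : f (Sum.inl (⟨1, by omega⟩ : Fin k)) = a :=
    nbr_of_r hw hwa hf hr (adjP_inl_iff.mpr (Or.inl (by simp)))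
  have posn : ∀ (u' : V), (∀ x, G.Adj u' x ↔ x = a ∨ x = b) →
      ∃ m n : Fin k ⊕ Fin t × Fin 2, f m = u' ∧ f n = b ∧
        ((m = Sum.inl ⟨2, by omega⟩ ∧ n = Sum.inl ⟨3, by omega⟩) ∨
         (m = Sum.inl ⟨k-1, by omega⟩ ∧ n = Sum.inl ⟨k-2, by omega⟩) ∨
         (∃ c d, m = Sum.inr (c, d) ∧ n = Sum.inr (c, ⟨1 - d.val, by omega⟩))) := by
    intro u' hNu'
    have hu'a : G.Adj u' a := (hNu' a).mpr (Or.inl rfl)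
    obtain ⟨m, hm⟩ := get_m hw hwa hu'a hno hf hr
    have key : ∀ y, (PkPlustP2 k t).Adj m y → f y = a ∨ f y = b :=
      fun y hy => nbr_m hw hwa hNu' hf hr hm hy
    have keya : ∀ y, f y = a → y = Sum.inl (⟨1, by omega⟩ : Fin k) :=
      fun y h => f.injective (h.trans hs0.symm)
    rcases m with q | ⟨c, d⟩
    · have hq := q.isLt
      have hq0 : q.val ≠ 0 := by
        intro h
        have : (Sum.inl q : Fin k ⊕ Fin t × Fin 2) = Sum.inl ⟨0, by omega⟩ :=
          congrArg Sum.inl (Fin.ext h)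
        rw [this, hr] at hm
        exact hw a (hm ▸ hu'a)
      have hq1 : q.val ≠ 1 := by
        intro h
        have : (Sum.inl q : Fin k ⊕ Fin t × Fin 2) = Sum.inl ⟨1, by omega⟩ :=
          congrArg Sum.inl (Fin.ext h)
        rw [this, hs0] at hm
        exact hu'a.ne hm.symm
      by_cases hqk : q.val = k - 1
      · refine ⟨Sum.inl q, Sum.inl ⟨k-2, by omega⟩, hm, ?_,
          Or.inr (Or.inl ⟨congrArg Sum.inl (Fin.ext hqk), rfl⟩)⟩
        have hadj : (PkPlustP2 k t).Adj (Sum.inl q) (Sum.inl ⟨k-2, by omega⟩) :=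
          adjP_inl_iff.mpr (Or.inr (by simp; omega))
        rcases key _ hadj with h | h
        · have := keya _ h
          simp only [Sum.inl.injEq, Fin.mk.injEq] at this
          omega
        · exact h
      · have hlt : q.val + 1 < k := by omega
        have hadj1 : (PkPlustP2 k t).Adj (Sum.inl q) (Sum.inl ⟨q.val + 1, hlt⟩) :=
          adjP_inl_iff.mpr (Or.inl rfl)
        have hb1 : f (Sum.inl (⟨q.val + 1, hlt⟩ : Fin k)) = b := by
          rcases key _ hadj1 with h | h
          · have := keya _ h
            simp only [Sum.inl.injEq, Fin.mk.injEq] at this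
            omega
          · exact h
        by_cases hq2 : q.val = 2
        · exact ⟨Sum.inl q, Sum.inl ⟨q.val + 1, hlt⟩, hm, hb1,
            Or.inl ⟨congrArg Sum.inl (Fin.ext hq2),
              congrArg Sum.inl (Fin.ext (by simp [hq2]))⟩⟩
        · have hadj0 : (PkPlustP2 k t).Adj (Sum.inl q) (Sum.inl ⟨q.val - 1, by omega⟩) :=
            adjP_inl_iff.mpr (Or.inr (by simp; omega))
          have hb0 : f (Sum.inl (⟨q.val - 1, by omega⟩ : Fin k)) = b := by
            rcases key _ hadj0 with h | h
            · have := keya _ h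
              simp only [Sum.inl.injEq, Fin.mk.injEq] at this
              omega
            · exact h
          have := f.injective (hb0.trans hb1.symm)
          simp only [Sum.inl.injEq, Fin.mk.injEq] at this
          omega
    · refine ⟨Sum.inr (c, d), Sum.inr (c, ⟨1 - d.val, by omega⟩), hm, ?_,
        Or.inr (Or.inr ⟨c, d, rfl, rfl⟩)⟩
      have hd := d.isLt
      have hadj : (PkPlustP2 k t).Adj (Sum.inr (c, d)) (Sum.inr (c, ⟨1 - d.val, by omega⟩)) :=
        adjP_inr_iff.mpr ⟨rfl, fun h => by
          have := congrArg Fin.val h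
          simp at this; omega⟩
      rcases key _ hadj with h | h
      · exact absurd (keya _ h) (by simp)
      · exact h
  obtain ⟨m, n, hm, hn, hcase⟩ := posn u hNu
  obtain ⟨m', n', hm', hn', hcase'⟩ := posn v hNv
  have hnn : n = n' := f.injective (hn.trans hn'.symm)
  have hmm : m ≠ m' := fun h => huv (hm.symm.trans (h ▸ hm'))
  subst hnn
  rcases hcase with ⟨h1, h2⟩ | ⟨h1, h2⟩ | ⟨c, d, h1, h2⟩ <;>
    rcases hcase' with ⟨h1', h2'⟩ | ⟨h1', h2'⟩ | ⟨c', d', h1', h2'⟩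
  · exact hmm (h1.trans h1'.symm)
  · have := h2.symm.trans h2'
    simp only [Sum.inl.injEq, Fin.mk.injEq] at this
    omega
  · exact absurd (h2.symm.trans h2') (by simp)
  · have := h2.symm.trans h2'
    simp only [Sum.inl.injEq, Fin.mk.injEq] at this
    omega
  · exact hmm (h1.trans h1'.symm)
  · exact absurd (h2.symm.trans h2') (by simp)
  · exact absurd (h2.symm.trans h2') (by simp)
  · exact absurd (h2.symm.trans h2') (by simp)
  · have := h2.symm.trans h2'
    simp only [Sum.inr.injEq, Prod.mk.injEq, Fin.mk.injEq] at this
    obtain ⟨hc, hd⟩ := this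
    have hdd := d.isLt
    have hdd' := d'.isLt
    have : d = d' := Fin.ext (by omega)
    exact hmm (h1.trans (by rw [hc, this, ← h1']))

lemma caseA {V : Type*} {G : SimpleGraph V} {k t : ℕ} (hk : 6 ≤ k) {w a b u v : V}
    (hw : ∀ x, ¬ G.Adj w x) (huv : u ≠ v)
    (hNu : ∀ x, G.Adj u x ↔ x = a ∨ x = b)
    (hNv : ∀ x, G.Adj v x ↔ x = a ∨ x = b)
    (hno : ¬ ContainsCopy (PkPlustP2 k t) G)
    (f : (Fin k ⊕ Fin t × Fin 2) ↪ V)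
    (hf : ∀ x y, (PkPlustP2 k t).Adj x y → (addE G w a).Adj (f x) (f y))
    (c0 : Fin t) (d0 : Fin 2) (hr : f (Sum.inr (c0, d0)) = w) : False := by
  have hua : G.Adj u a := (hNu a).mpr (Or.inl rfl)
  have hva : G.Adj v a := (hNv a).mpr (Or.inl rfl)
  have hwa : w ≠ a := fun h => hw u (h ▸ hua.symm)
  have hd0 := d0.isLt
  have hs0 : f (Sum.inr (c0, ⟨1 - d0.val, by omega⟩)) = a := by
    refine nbr_of_r hw hwa hf hr (adjP_inr_iff.mpr ⟨rfl, fun h => ?_⟩)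
    have := congrArg Fin.val h
    simp at this; omega
  have posn : ∀ (u' : V), (∀ x, G.Adj u' x ↔ x = a ∨ x = b) →
      ∃ m n : Fin k ⊕ Fin t × Fin 2, f m = u' ∧ f n = b ∧
        (PkPlustP2 k t).Adj m n ∧ (∀ y, (PkPlustP2 k t).Adj m y → y = n) := by
    intro u' hNu'
    have hu'a : G.Adj u' a := (hNu' a).mpr (Or.inl rfl)
    obtain ⟨m, hm⟩ := get_m hw hwa hu'a hno hf hr
    have hmr : m ≠ Sum.inr (c0, d0) := by
      intro h
      rw [h, hr] at hm
      exact hw a (hm ▸ hu'a)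
    have allb : ∀ y, (PkPlustP2 k t).Adj m y → f y = b := by
      intro y hy
      rcases nbr_m hw hwa hNu' hf hr hm hy with h | h
      · exfalso
        have hys : y = Sum.inr (c0, ⟨1 - d0.val, by omega⟩) := f.injective (h.trans hs0.symm)
        rw [hys] at hy
        rcases m with q | ⟨c, d⟩
        · exact adjP_not_lr hy
        · obtain ⟨hc, hd⟩ := adjP_inr_iff.mp hy
          simp only at hc
          have hdville := d.isLt
          have hdne : d.val ≠ 1 - d0.val := fun hh => hd (Fin.ext hh)
          have : d = d0 := Fin.ext (by omega)
          exact hmr (by rw [hc, this])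
      · exact h
    obtain ⟨n, hn⟩ := exists_nbrP (by omega) m
    exact ⟨m, n, hm, allb n hn, hn,
      fun y hy => f.injective ((allb y hy).trans (allb n hn).symm)⟩
  obtain ⟨m, n, hm, hn, hadj, huniq⟩ := posn u hNu
  obtain ⟨m', n', hm', hn', hadj', huniq'⟩ := posn v hNv
  have hnn : n = n' := f.injective (hn.trans hn'.symm)
  have hmm : m ≠ m' := fun h => huv (hm.symm.trans (h ▸ hm'))
  subst hnn
  rcases n with q | ⟨c, d⟩
  · have loc : ∀ m1 : Fin k ⊕ Fin t × Fin 2, (PkPlustP2 k t).Adj m1 (Sum.inl q) →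
        (∀ y, (PkPlustP2 k t).Adj m1 y → y = Sum.inl q) →
        ∃ p : Fin k, m1 = Sum.inl p ∧
          ((p.val = 0 ∧ q.val = 1) ∨ (p.val = k - 1 ∧ q.val = k - 2)) := by
      intro m1 hadj1 huniq1
      rcases m1 with p | z
      · refine ⟨p, rfl, ?_⟩
        have hp := p.isLt
        have hq := q.isLt
        rcases adjP_inl_iff.mp hadj1 with h | h
        · by_cases hp0 : p.val = 0
          · exact Or.inl ⟨hp0, by omega⟩
          · have h2 := huniq1 (Sum.inl ⟨p.val - 1, by omega⟩)
              (adjP_inl_iff.mpr (Or.inr (by simp; omega)))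
            simp only [Sum.inl.injEq] at h2
            have h3 : p.val - 1 = q.val := congrArg Fin.val h2
            omega
        · by_cases hpk : p.val = k - 1
          · exact Or.inr ⟨hpk, by omega⟩
          · have h2 := huniq1 (Sum.inl ⟨p.val + 1, by omega⟩)
              (adjP_inl_iff.mpr (Or.inl (by simp)))
            simp only [Sum.inl.injEq] at h2
            have h3 : p.val + 1 = q.val := congrArg Fin.val h2
            omega
      · exact absurd hadj1 adjP_not_rl
    obtain ⟨p, hmp, hdisj⟩ := loc m hadj huniq
    obtain ⟨p', hmp', hdisj'⟩ := loc m' hadj' huniq'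
    have hpp : p.val ≠ p'.val := by
      intro h
      exact hmm (hmp.trans ((congrArg Sum.inl (Fin.ext h)).trans hmp'.symm))
    omega
  · have loc : ∀ m1 : Fin k ⊕ Fin t × Fin 2, (PkPlustP2 k t).Adj m1 (Sum.inr (c, d)) →
        ∃ e : Fin 2, m1 = Sum.inr (c, e) ∧ e ≠ d := by
      intro m1 hadj1
      rcases m1 with p | ⟨c1, e1⟩
      · exact absurd hadj1 adjP_not_lr
      · obtain ⟨hc, hd⟩ := adjP_inr_iff.mp hadj1
        simp only at hc hd
        exact ⟨e1, by rw [hc], hd⟩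
    obtain ⟨e, hme, hed⟩ := loc m hadj
    obtain ⟨e', hme', hed'⟩ := loc m' hadj'
    have : e = e' := by
      have h1 := e.isLt; have h2 := e'.isLt; have h3 := d.isLt
      have h4 : e.val ≠ d.val := fun hh => hed (Fin.ext hh)
      have h5 : e'.val ≠ d.val := fun hh => hed' (Fin.ext hh)
      exact Fin.ext (by omega)
    exact hmm (hme.trans (by rw [this, ← hme']))

end BookAux

theorem not_book_structural {V : Type*} [Fintype V] (G : SimpleGraph V) (k t : ℕ)
    (hk : 6 ≤ k) (ht : 1 ≤ t) (hsat : IsSaturated (PkPlustP2 k t) G)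
    (w : V) (hw : G.neighborSet w = ∅) :
    ¬ BookStructural G := by
  rintro ⟨u, v, huv, h2u, -, heq⟩
  have hw' : ∀ x, ¬ G.Adj w x := fun x hx => by
    have hmem : x ∈ G.neighborSet w := hx
    rw [hw] at hmem
    exact hmem
  obtain ⟨a, b, hab, hNuS⟩ := Set.ncard_eq_two.mp h2u
  have hNu : ∀ x, G.Adj u x ↔ x = a ∨ x = b := fun x => by
    rw [← SimpleGraph.mem_neighborSet, hNuS]; simp
  have hNv : ∀ x, G.Adj v x ↔ x = a ∨ x = b := fun x => by
    rw [← SimpleGraph.mem_neighborSet, ← heq, hNuS]; simp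
  have hua : G.Adj u a := (hNu a).mpr (Or.inl rfl)
  have hwa : w ≠ a := fun h => hw' u (h ▸ hua.symm)
  obtain ⟨f, hf⟩ := hsat.2 w a hwa (hw' a)
  have hno := hsat.1
  have hrange : ∃ r, f r = w := by
    by_contra hc
    push_neg at hc
    refine hno ⟨f, fun x y hxy => ?_⟩
    rcases addE_cases (hf x y hxy) with h | ⟨h, _⟩ | ⟨_, h⟩
    · exact h
    · exact absurd h (hc x)
    · exact absurd h (hc y)
  obtain ⟨r, hr⟩ := hrange
  rcases r with p | ⟨c0, d0⟩
  · have hp := p.isLt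
    by_cases hp0 : p.val = 0
    · exact caseB hk hw' huv hNu hNv hno f hf
        (by rw [show (⟨0, by omega⟩ : Fin k) = p from Fin.ext hp0.symm]; exact hr)
    by_cases hpk : p.val = k - 1
    · have hinj : Function.Injective
          (Sum.map (fun i : Fin k => (⟨k - 1 - i.val, by omega⟩ : Fin k))
            (id : Fin t × Fin 2 → Fin t × Fin 2)) := by
        refine Function.Injective.sumMap (fun i j h => ?_) fun z z' h => h
        have hi := i.isLt; have hj := j.isLt
        have := congrArg Fin.val h
        simp only [] at this
        exact Fin.ext (by omega)
      refine caseB hk hw' huv hNu hNv hno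
        (Function.Embedding.trans ⟨_, hinj⟩ f) (fun x y hxy => hf _ _ ?_) ?_
      · rcases x with i | z <;> rcases y with j | z'
        · have hi := i.isLt; have hj := j.isLt
          rcases adjP_inl_iff.mp hxy with h | h
          · exact Sum.LiftRel.inl (Or.inr (show (k - 1 - j.val) + 1 = k - 1 - i.val by omega))
          · exact Sum.LiftRel.inl (Or.inl (show (k - 1 - i.val) + 1 = k - 1 - j.val by omega))
        · exact absurd hxy adjP_not_lr
        · exact absurd hxy adjP_not_rl
        · exact hxy
      · show f (Sum.inl ⟨k - 1 - (0 : ℕ), by omega⟩) = w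
        rw [show (Sum.inl (⟨k - 1 - (0 : ℕ), by omega⟩ : Fin k) : Fin k ⊕ Fin t × Fin 2)
            = Sum.inl p from congrArg Sum.inl (Fin.ext (show k - 1 - 0 = p.val by omega))]
        exact hr
    · have h1 : f (Sum.inl ⟨p.val - 1, by omega⟩) = a :=
        nbr_of_r hw' hwa hf hr (adjP_inl_iff.mpr (Or.inr (show (p.val - 1) + 1 = p.val by omega)))
      have h2 : f (Sum.inl ⟨p.val + 1, by omega⟩) = a :=
        nbr_of_r hw' hwa hf hr (adjP_inl_iff.mpr (Or.inl rfl))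
      have := f.injective (h1.trans h2.symm)
      simp only [Sum.inl.injEq, Fin.mk.injEq] at this
      omega
  · exact caseA hk hw' huv hNu hNv hno f hf c0 d0 hr
end
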